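/- arXiv:1412.0222 — 3 statements merged into one kernel-verified Lean document; each statement's English description precedes it below -/
import Mathlib

section
/- (Jensen inequality for the normalized partial trace and the quasi-norm ‖·‖_{p/2}.) Let 0<p≤2 and let t be a positive semidefinite matrix in M_m(ℂ) ⊗ M_n(ℂ), viewed as an m×m block matrix (t_{ij})_{1≤i,j≤m} with blocks t_{ij} ∈ M_n(ℂ). Then (1/m)·Tr(t^{p/2}) ≤ Tr( ((1/m)·∑_{i=1}^m t_{ii})^{p/2} ), where the powers p/2 are taken by the spectral functional calculus of positive semidefinite matrices. -/
open scoped BigOperators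
open Matrix MeasureTheory
open scoped ComplexOrder

/-- `A^β` for a Hermitian (in practice positive semidefinite) matrix `A`, via the
spectral functional calculus (with the conventions of `Real.rpow` on eigenvalues,
in particular `0 ^ β = 0` for `β ≠ 0`), extended by `0` to non-Hermitian matrices. -/
noncomputable def posPow {ι : Type*} [Fintype ι] [DecidableEq ι]
    (A : Matrix ι ι ℂ) (β : ℝ) : Matrix ι ι ℂ :=
  if hA : A.IsHermitian then hA.cfc (fun t => t ^ β) else 0

/-- Schatten `p`-(quasi)norm of a complex matrix: `(Tr((A*A)^(p/2)))^(1/p)`. -/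
noncomputable def schattenNorm {ι : Type*} [Fintype ι] [DecidableEq ι]
    (p : ℝ) (A : Matrix ι ι ℂ) : ℝ :=
  ((posPow (Aᴴ * A) (p / 2)).trace.re) ^ (1 / p)

/-- Operator norm of a matrix, acting on the Euclidean space. -/
noncomputable def opNorm {ι : Type*} [Fintype ι] [DecidableEq ι]
    (A : Matrix ι ι ℂ) : ℝ :=
  ‖Matrix.toEuclideanCLM (𝕜 := ℂ) A‖

/-- The quantity `|||x|||_p` for `0 < p ≤ 2`: the infimum of
`‖(∑ aₖ*aₖ)^(1/2)‖_p + ‖(∑ bₖbₖ*)^(1/2)‖_p` over decompositions `xₖ = aₖ + bₖ`. -/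
noncomputable def tripleNorm {n N : ℕ} (p : ℝ)
    (x : Fin N → Matrix (Fin n) (Fin n) ℂ) : ℝ :=
  sInf { r : ℝ | ∃ a b : Fin N → Matrix (Fin n) (Fin n) ℂ,
    (∀ k, x k = a k + b k) ∧
    r = schattenNorm p (posPow (∑ k, (a k)ᴴ * a k) (1/2))
        + schattenNorm p (posPow (∑ k, b k * (b k)ᴴ) (1/2)) }

/-- `E_ε ‖∑ ε_k x_k‖_p ^ p`, the average over a uniformly random choice of signs. -/
noncomputable def radAvg {n N : ℕ} (p : ℝ)
    (x : Fin N → Matrix (Fin n) (Fin n) ℂ) : ℝ :=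
  (1 / 2 ^ N) * ∑ ε : Fin N → Bool,
    (schattenNorm p (∑ k, (if ε k then (1 : ℂ) else -1) • x k)) ^ p

/-! Write `t = ∑ₐ λₐ uₐ uₐ*` and `Φ(t) = (1/m) ∑ᵢ tᵢᵢ = ∑_b ν_b q_b q_b*` spectrally, and let
`(uₐ)ᵢ ∈ ℂⁿ` be the `i`-th block of `uₐ`. The weights `P a b = (1/m) ∑ᵢ |⟨(uₐ)ᵢ, q_b⟩|²` have
column sums `1` and row sums `1/m` (orthonormality of the `uₐ` and of the `q_b`), and
`ν_b = ⟨q_b, Φ(t) q_b⟩ = ∑ₐ P a b λₐ`. Jensen's inequality for the concave map `x ↦ x^{p/2}`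
in each column `b`, summed over `b`, gives `(1/m) ∑ₐ λₐ^{p/2} ≤ ∑_b ν_b^{p/2}`. -/

open Complex

theorem ConcaveOn.mul_sum_le_sum_map_sum_mul {α κ : Type*} [Fintype α] [Fintype κ]
    {S : Set ℝ} {f : ℝ → ℝ} (hf : ConcaveOn ℝ S f) {x : α → ℝ} (hx : ∀ a, x a ∈ S)
    {P : α → κ → ℝ} (hP : ∀ a b, 0 ≤ P a b) {c : ℝ} (hrow : ∀ a, ∑ b, P a b = c)
    (hcol : ∀ b, ∑ a, P a b = 1) :
    c * ∑ a, f (x a) ≤ ∑ b, f (∑ a, P a b * x a) :=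
  calc c * ∑ a, f (x a) = ∑ a, (∑ b, P a b) * f (x a) := by simp only [hrow, Finset.mul_sum]
    _ = ∑ b, ∑ a, P a b • f (x a) := by
        simp only [Finset.sum_mul, smul_eq_mul]
        exact Finset.sum_comm
    _ ≤ ∑ b, f (∑ a, P a b * x a) := Finset.sum_le_sum fun b _ =>
        hf.le_map_sum (fun a _ => hP a b) (hcol b) fun a _ => hx a

namespace Matrix

variable {ι κ α β : Type*}

theorem IsHermitian.trace_cfc [Fintype α] [DecidableEq α] {𝕜 : Type*} [RCLike 𝕜]
    {A : Matrix α α 𝕜} (hA : A.IsHermitian) (f : ℝ → ℝ) :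
    (hA.cfc f).trace = ∑ a, (f (hA.eigenvalues a) : 𝕜) := by
  rw [IsHermitian.cfc, Unitary.conjStarAlgAut_apply, trace_mul_cycle,
    Unitary.coe_star_mul_self, one_mul, trace_diagonal]
  rfl

theorem conjTranspose_mul_diagonal_mul_apply_self [Fintype α] [DecidableEq α] (d : α → ℝ)
    (M : Matrix α β ℂ) (b : β) :
    (Mᴴ * diagonal (ofReal ∘ d) * M) b b = ↑(∑ a, d a * normSq (M a b)) := by
  rw [mul_apply]
  push_cast
  refine Finset.sum_congr rfl fun a _ => ?_
  rw [mul_diagonal, conjTranspose_apply, normSq_eq_conj_mul_self, Function.comp_apply]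
  simp only [RCLike.star_def]
  ring

theorem conjTranspose_mul_self_apply_self [Fintype α] (M : Matrix α β ℂ) (b : β) :
    (Mᴴ * M) b b = ↑(∑ a, normSq (M a b)) := by
  rw [mul_apply]
  push_cast
  simp only [conjTranspose_apply, normSq_eq_conj_mul_self, RCLike.star_def]

theorem mul_conjTranspose_apply_self [Fintype β] (M : Matrix α β ℂ) (a : α) :
    (M * Mᴴ) a a = ↑(∑ b, normSq (M a b)) := by
  simpa [normSq_conj] using conjTranspose_mul_self_apply_self Mᴴ a

noncomputable def normalizedPartialTrace [Fintype ι] (t : Matrix (ι × κ) (ι × κ) ℂ) :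
    Matrix κ κ ℂ :=
  (Fintype.card ι : ℂ)⁻¹ • ∑ i, t.submatrix (Prod.mk i) (Prod.mk i)

theorem IsHermitian.normalizedPartialTrace [Fintype ι] {t : Matrix (ι × κ) (ι × κ) ℂ}
    (ht : t.IsHermitian) : (normalizedPartialTrace t).IsHermitian :=
  IsHermitian.smul (isSelfAdjoint_sum _ fun i _ => ht.submatrix (Prod.mk i))
    (by simp [IsSelfAdjoint])

theorem submatrix_mul_conjTranspose_submatrix_of_mem_unitaryGroup {n : Type*} [Fintype n]
    [DecidableEq n] [DecidableEq κ] {U : Matrix n n ℂ} (hU : U ∈ unitaryGroup n ℂ) {r : κ → n}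
    (hr : Function.Injective r) : U.submatrix r id * (U.submatrix r id)ᴴ = 1 := by
  rw [conjTranspose_submatrix, ← submatrix_mul _ _ _ _ _ Function.bijective_id,
    ← star_eq_conjTranspose, mem_unitaryGroup_iff.mp hU, submatrix_one _ hr]

theorem sum_conjTranspose_submatrix_mul_submatrix [Fintype ι] [Fintype κ]
    (U : Matrix (ι × κ) α ℂ) :
    ∑ i, (U.submatrix (Prod.mk i) id)ᴴ * U.submatrix (Prod.mk i) id = Uᴴ * U := by
  ext a c
  simp [mul_apply, sum_apply, Fintype.sum_prod_type]

theorem submatrix_mul_mul_conjTranspose [Fintype α] {n : Type*} (U : Matrix n α ℂ)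
    (D : Matrix α α ℂ) (r : κ → n) :
    (U * D * Uᴴ).submatrix r r = U.submatrix r id * D * (U.submatrix r id)ᴴ := by
  rw [submatrix_mul _ _ _ _ _ Function.bijective_id,
    submatrix_mul _ _ _ _ _ Function.bijective_id, conjTranspose_submatrix]
  rfl

noncomputable def partialTraceWeight [Fintype ι] [Fintype κ] (U : Matrix (ι × κ) α ℂ)
    (Q : Matrix κ β ℂ) (a : α) (b : β) : ℝ :=
  (Fintype.card ι : ℝ)⁻¹ * ∑ i, normSq (((U.submatrix (Prod.mk i) id)ᴴ * Q) a b)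

theorem partialTraceWeight_nonneg [Fintype ι] [Fintype κ] (U : Matrix (ι × κ) α ℂ)
    (Q : Matrix κ β ℂ) (a : α) (b : β) : 0 ≤ partialTraceWeight U Q a b := by
  unfold partialTraceWeight
  exact mul_nonneg (by positivity) (Finset.sum_nonneg fun i _ => normSq_nonneg _)

theorem sum_partialTraceWeight_mul [Fintype ι] [Fintype κ] [Fintype α] [DecidableEq α]
    (U : Matrix (ι × κ) α ℂ) (Q : Matrix κ β ℂ) (d : α → ℝ) (b : β) :
    ((∑ a, partialTraceWeight U Q a b * d a : ℝ) : ℂ) =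
      (Qᴴ * normalizedPartialTrace (U * diagonal (ofReal ∘ d) * Uᴴ) * Q) b b := by
  have hblock (i : ι) :
      (Qᴴ * (U * diagonal (ofReal ∘ d) * Uᴴ).submatrix (Prod.mk i) (Prod.mk i) * Q) b b =
        ↑(∑ a, d a * normSq (((U.submatrix (Prod.mk i) id)ᴴ * Q) a b)) := by
    rw [submatrix_mul_mul_conjTranspose, ← conjTranspose_mul_diagonal_mul_apply_self,
      conjTranspose_mul, conjTranspose_conjTranspose]
    simp only [Matrix.mul_assoc]
  simp only [normalizedPartialTrace, Matrix.mul_smul, Matrix.smul_mul, smul_apply, sum_apply,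
    Matrix.mul_sum, Matrix.sum_mul, hblock, partialTraceWeight, smul_eq_mul]
  push_cast
  simp only [Finset.mul_sum, Finset.sum_mul]
  rw [Finset.sum_comm]
  refine Finset.sum_congr rfl fun i _ => Finset.sum_congr rfl fun a _ => by ring

variable [Fintype ι] [Fintype κ] [DecidableEq ι] [DecidableEq κ]

theorem sum_partialTraceWeight_right {U : Matrix (ι × κ) (ι × κ) ℂ}
    (hU : U ∈ unitaryGroup (ι × κ) ℂ) {Q : Matrix κ κ ℂ} (hQ : Q ∈ unitaryGroup κ ℂ) (a : ι × κ) :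
    ∑ b, partialTraceWeight U Q a b = (Fintype.card ι : ℝ)⁻¹ := by
  have hblock (i : ι) : ((∑ b, normSq (((U.submatrix (Prod.mk i) id)ᴴ * Q) a b) : ℝ) : ℂ) =
      ((U.submatrix (Prod.mk i) id)ᴴ * U.submatrix (Prod.mk i) id) a a := by
    rw [← mul_conjTranspose_apply_self, conjTranspose_mul, conjTranspose_conjTranspose,
      Matrix.mul_assoc, ← Matrix.mul_assoc Q, ← star_eq_conjTranspose, mem_unitaryGroup_iff.mp hQ,
      Matrix.one_mul]
  have hsum : ∑ i, ∑ b, normSq (((U.submatrix (Prod.mk i) id)ᴴ * Q) a b) = 1 := by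
    apply ofReal_injective
    rw [ofReal_sum]
    simp only [hblock]
    rw [← Matrix.sum_apply, sum_conjTranspose_submatrix_mul_submatrix, ← star_eq_conjTranspose,
      mem_unitaryGroup_iff'.mp hU, one_apply_eq, ofReal_one]
  simp only [partialTraceWeight, ← Finset.mul_sum]
  rw [Finset.sum_comm, hsum, mul_one]

theorem sum_partialTraceWeight_left [Nonempty ι] {U : Matrix (ι × κ) (ι × κ) ℂ}
    (hU : U ∈ unitaryGroup (ι × κ) ℂ) {Q : Matrix κ κ ℂ} (hQ : Q ∈ unitaryGroup κ ℂ) (b : κ) :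
    ∑ a, partialTraceWeight U Q a b = 1 := by
  have hblock (i : ι) : ∑ a, normSq (((U.submatrix (Prod.mk i) id)ᴴ * Q) a b) = 1 := by
    apply ofReal_injective
    rw [← conjTranspose_mul_self_apply_self, conjTranspose_mul, conjTranspose_conjTranspose,
      Matrix.mul_assoc, ← Matrix.mul_assoc (U.submatrix _ id),
      submatrix_mul_conjTranspose_submatrix_of_mem_unitaryGroup hU (Prod.mk_right_injective i),
      Matrix.one_mul, ← star_eq_conjTranspose, mem_unitaryGroup_iff'.mp hQ, one_apply_eq,
      ofReal_one]
  simp only [partialTraceWeight, ← Finset.mul_sum]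
  rw [Finset.sum_comm]
  simp only [hblock, Finset.sum_const, Finset.card_univ, nsmul_eq_mul, mul_one]
  exact inv_mul_cancel₀ (Nat.cast_ne_zero.mpr Fintype.card_ne_zero)

theorem IsHermitian.sum_partialTraceWeight_mul_eigenvalues {t : Matrix (ι × κ) (ι × κ) ℂ}
    (ht : t.IsHermitian) (b : κ) :
    ∑ a, partialTraceWeight (ht.eigenvectorUnitary : Matrix (ι × κ) (ι × κ) ℂ)
        (ht.normalizedPartialTrace.eigenvectorUnitary : Matrix κ κ ℂ) a b * ht.eigenvalues a =
      ht.normalizedPartialTrace.eigenvalues b := by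
  have htU : t = ht.eigenvectorUnitary * diagonal (ofReal ∘ ht.eigenvalues) *
      (ht.eigenvectorUnitary : Matrix (ι × κ) (ι × κ) ℂ)ᴴ :=
    ht.spectral_theorem.trans (Unitary.conjStarAlgAut_apply _ _)
  have hsQ := congrFun (congrFun
    ht.normalizedPartialTrace.conjStarAlgAut_star_eigenvectorUnitary b) b
  rw [Unitary.conjStarAlgAut_star_apply, diagonal_apply_eq] at hsQ
  apply ofReal_injective
  rw [sum_partialTraceWeight_mul, ← htU]
  exact hsQ

theorem IsHermitian.inv_card_mul_sum_map_eigenvalues_le [Nonempty ι]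
    {t : Matrix (ι × κ) (ι × κ) ℂ} (ht : t.IsHermitian) {S : Set ℝ} {f : ℝ → ℝ}
    (hf : ConcaveOn ℝ S f) (hS : ∀ a, ht.eigenvalues a ∈ S) :
    (Fintype.card ι : ℝ)⁻¹ * ∑ a, f (ht.eigenvalues a) ≤
      ∑ b, f (ht.normalizedPartialTrace.eigenvalues b) := by
  have hU := ht.eigenvectorUnitary.2
  have hQ := ht.normalizedPartialTrace.eigenvectorUnitary.2
  simpa only [ht.sum_partialTraceWeight_mul_eigenvalues] using
    hf.mul_sum_le_sum_map_sum_mul hS (partialTraceWeight_nonneg _ _)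
      (sum_partialTraceWeight_right hU hQ) (sum_partialTraceWeight_left hU hQ)

theorem PosSemidef.inv_card_mul_trace_posPow_le [Nonempty ι] {t : Matrix (ι × κ) (ι × κ) ℂ}
    (ht : t.PosSemidef) {β : ℝ} (hβ0 : 0 ≤ β) (hβ1 : β ≤ 1) :
    (Fintype.card ι : ℝ)⁻¹ * (posPow t β).trace.re ≤
      (posPow (normalizedPartialTrace t) β).trace.re := by
  simp only [posPow, dif_pos ht.1, dif_pos ht.1.normalizedPartialTrace, IsHermitian.trace_cfc,
    re_sum]
  exact ht.1.inv_card_mul_sum_map_eigenvalues_le (Real.concaveOn_rpow hβ0 hβ1)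
    ht.eigenvalues_nonneg

end Matrix

/-- Jensen's inequality for the normalized partial trace and `‖·‖_(p/2)`, `0 < p ≤ 2`. -/
theorem statement8 (p : ℝ) (hp0 : 0 < p) (hp2 : p ≤ 2) (m n : ℕ) (hm : 0 < m)
    (t : Matrix (Fin m × Fin n) (Fin m × Fin n) ℂ) (ht : t.PosSemidef) :
    (1 / m : ℝ) * (posPow t (p / 2)).trace.re ≤
      (posPow ((1 / m : ℂ) •
          ∑ i : Fin m, (Matrix.of (fun a b => t (i, a) (i, b)) : Matrix (Fin n) (Fin n) ℂ))
        (p / 2)).trace.re := by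
  have : Nonempty (Fin m) := Fin.pos_iff_nonempty.mp hm
  have hs : (1 / m : ℂ) • ∑ i : Fin m, (Matrix.of (fun a b => t (i, a) (i, b)) :
      Matrix (Fin n) (Fin n) ℂ) = Matrix.normalizedPartialTrace t := by
    simp only [Matrix.normalizedPartialTrace, Fintype.card_fin, one_div]
    rfl
  rw [hs]
  simpa using ht.inv_card_mul_trace_posPow_le (β := p / 2) (by linarith) (by linarith)
end

section
/- (2-concavity of Schatten p-classes for 0<p≤2.) Let 0<p≤2. For every n, N and all matrices z_1,…,z_N ∈ M_n(ℂ): (∑_{i=1}^N ‖z_i‖_p^2)^{1/2} ≤ ‖(∑_{i=1}^N z_i* z_i)^{1/2}‖_p. -/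
open scoped BigOperators
open Matrix MeasureTheory
open scoped ComplexOrder

/-! With `Bᵢ = zᵢ* zᵢ` and `q = p / 2 ≤ 1` one has `‖zᵢ‖_p ^ 2 = (Tr Bᵢ^q)^(1/q)` and
`‖(∑ Bᵢ)^(1/2)‖_p ^ 2 = (Tr C^q)^(1/q)` for `C = ∑ Bᵢ`, so the claim is the superadditivity of
`B ↦ (Tr B^q)^(1/q)` on positive semidefinite matrices (for `q = 1` it is additivity of the trace).
For `q < 1` let `X = C^(q-1)`, with `0^(q-1) = 0`. A reverse Hölder inequality gives
`(Tr Bᵢ^q)^(1/q) ≤ Tr(Bᵢ X) · (Tr C^q)^((1-q)/q)`, and summing over `i` with `Tr(C X) = Tr C^q`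
yields `∑ᵢ (Tr Bᵢ^q)^(1/q) ≤ (Tr C^q)^(1/q)`. In eigenbases `(vₖ)` of `Bᵢ` and `(uⱼ)` of `C` the
reverse Hölder inequality is the ordinary Hölder inequality with exponents `1/q`, `1/(1-q)` for
the doubly stochastic weights `|⟨vₖ, uⱼ⟩|²`; zero eigenvalues of `C` are harmless because
`Bᵢ ≤ C` forces `ker C ⊆ ker Bᵢ`. -/

open Finset

theorem Real.sum_rpow_mul_rpow_le {ι : Type*} (s : Finset ι) {q : ℝ} (hq0 : 0 < q) (hq1 : q < 1)
    {f g : ι → ℝ} (hf : ∀ i ∈ s, 0 ≤ f i) (hg : ∀ i ∈ s, 0 ≤ g i) :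
    ∑ i ∈ s, f i ^ q * g i ^ (1 - q) ≤ (∑ i ∈ s, f i) ^ q * (∑ i ∈ s, g i) ^ (1 - q) := by
  have h := Real.inner_le_Lp_mul_Lq_of_nonneg s (Real.HolderConjugate.inv_one_sub_inv hq0 hq1)
    (fun i hi => Real.rpow_nonneg (hf i hi) q) (fun i hi => Real.rpow_nonneg (hg i hi) (1 - q))
  have hq1' : 0 < 1 - q := by linarith
  simp only [one_div, inv_inv] at h
  convert h using 3
  · refine sum_congr rfl fun i hi => ?_
    rw [← Real.rpow_mul (hf i hi), mul_inv_cancel₀ hq0.ne', Real.rpow_one]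
  · refine sum_congr rfl fun i hi => ?_
    rw [← Real.rpow_mul (hg i hi), mul_inv_cancel₀ hq1'.ne', Real.rpow_one]

section DoublyStochastic

variable {ι κ : Type*} [Fintype ι] [Fintype κ] {q : ℝ} {a : ι → ℝ} {μ : κ → ℝ} {d : ι → κ → ℝ}

theorem sum_rpow_le_of_doublyStochastic (hq0 : 0 < q) (hq1 : q < 1)
    (ha : ∀ i, 0 ≤ a i) (hμ : ∀ j, 0 ≤ μ j) (hd : ∀ i j, 0 ≤ d i j)
    (hrow : ∀ i, ∑ j, d i j = 1) (hcol : ∀ j, ∑ i, d i j = 1)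
    (hker : ∀ i j, μ j = 0 → d i j * a i = 0) :
    ∑ i, a i ^ q ≤ (∑ i, ∑ j, d i j * a i * μ j ^ (q - 1)) ^ q * (∑ j, μ j ^ q) ^ (1 - q) := by
  have hq1' : 1 - q ≠ 0 := by linarith
  have hsplit : ∀ i j, d i j * a i ^ q
      = (d i j * a i * μ j ^ (q - 1)) ^ q * (d i j * μ j ^ q) ^ (1 - q) := by
    intro i j
    have hdi := hd i j
    have hai := ha i
    rcases (hμ j).eq_or_lt with hμj | hμj
    · rw [← hμj, Real.zero_rpow hq0.ne', mul_zero, Real.zero_rpow hq1', mul_zero]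
      rcases mul_eq_zero.mp (hker i j hμj.symm) with h | h <;> simp [h, Real.zero_rpow hq0.ne']
    · rw [Real.mul_rpow (by positivity) (by positivity), Real.mul_rpow hdi hai,
        Real.mul_rpow hdi (by positivity), ← Real.rpow_mul hμj.le, ← Real.rpow_mul hμj.le]
      calc d i j * a i ^ q
          = d i j ^ (q + (1 - q)) * a i ^ q * μ j ^ ((q - 1) * q + q * (1 - q)) := by
            rw [show q + (1 - q) = 1 by ring, show (q - 1) * q + q * (1 - q) = 0 by ring,
              Real.rpow_one, Real.rpow_zero, mul_one]
        _ = _ := by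
            rw [Real.rpow_add' hdi (by norm_num), Real.rpow_add hμj]
            ring
  calc ∑ i, a i ^ q = ∑ i, ∑ j, d i j * a i ^ q := by
        simp only [← sum_mul, hrow, one_mul]
    _ = ∑ i, ∑ j, (d i j * a i * μ j ^ (q - 1)) ^ q * (d i j * μ j ^ q) ^ (1 - q) := by
        simp only [hsplit]
    _ ≤ (∑ i, ∑ j, d i j * a i * μ j ^ (q - 1)) ^ q * (∑ i, ∑ j, d i j * μ j ^ q) ^ (1 - q) := by
        simp only [← Fintype.sum_prod_type']
        exact Real.sum_rpow_mul_rpow_le _ hq0 hq1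
          (fun x _ => by have := hμ x.2; have := hd x.1 x.2; have := ha x.1; positivity)
          (fun x _ => by have := hμ x.2; have := hd x.1 x.2; positivity)
    _ = _ := by
        rw [sum_comm (f := fun i j => d i j * μ j ^ q)]
        simp only [← sum_mul, hcol, one_mul]

theorem rpow_sum_rpow_le_of_doublyStochastic (hq0 : 0 < q) (hq1 : q < 1)
    (ha : ∀ i, 0 ≤ a i) (hμ : ∀ j, 0 ≤ μ j) (hd : ∀ i j, 0 ≤ d i j)
    (hrow : ∀ i, ∑ j, d i j = 1) (hcol : ∀ j, ∑ i, d i j = 1)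
    (hker : ∀ i j, μ j = 0 → d i j * a i = 0) :
    (∑ i, a i ^ q) ^ (1 / q) ≤
      (∑ i, ∑ j, d i j * a i * μ j ^ (q - 1)) * (∑ j, μ j ^ q) ^ ((1 - q) / q) := by
  have hS : 0 ≤ ∑ i, ∑ j, d i j * a i * μ j ^ (q - 1) := sum_nonneg fun i _ => sum_nonneg
    fun j _ => by have := hμ j; have := hd i j; have := ha i; positivity
  have hT : 0 ≤ ∑ j, μ j ^ q := sum_nonneg fun j _ => by have := hμ j; positivity
  calc (∑ i, a i ^ q) ^ (1 / q)
      ≤ ((∑ i, ∑ j, d i j * a i * μ j ^ (q - 1)) ^ q * (∑ j, μ j ^ q) ^ (1 - q)) ^ (1 / q) :=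
        Real.rpow_le_rpow (sum_nonneg fun i _ => by have := ha i; positivity)
          (sum_rpow_le_of_doublyStochastic hq0 hq1 ha hμ hd hrow hcol hker) (by positivity)
    _ = _ := by
        rw [Real.mul_rpow (by positivity) (by positivity), ← Real.rpow_mul hS, ← Real.rpow_mul hT,
          mul_one_div_cancel hq0.ne', Real.rpow_one, mul_one_div]

end DoublyStochastic

namespace Matrix

variable {m : Type*} [Fintype m] {A B C : Matrix m m ℂ}

lemma PosSemidef.mulVec_eq_zero_of_sub (hB : B.PosSemidef) (hCB : (C - B).PosSemidef)
    {u : m → ℂ} (hu : C *ᵥ u = 0) : B *ᵥ u = 0 := by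
  refine (hB.dotProduct_mulVec_zero_iff u).mp (le_antisymm ?_ (hB.dotProduct_mulVec_nonneg u))
  have h := hCB.dotProduct_mulVec_nonneg u
  rwa [sub_mulVec, dotProduct_sub, hu, dotProduct_zero, zero_sub, neg_nonneg] at h

variable [DecidableEq m]

lemma sum_normSq_row_eq_one {W : Matrix m m ℂ} (hW : W ∈ unitaryGroup m ℂ) (k : m) :
    ∑ j, Complex.normSq (W k j) = 1 := by
  have h : (W * star W) k k = (1 : Matrix m m ℂ) k k := by rw [Unitary.mul_star_self_of_mem hW]
  simp only [mul_apply, star_apply, Complex.star_def, Complex.mul_conj, one_apply_eq] at h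
  exact_mod_cast h

lemma sum_normSq_col_eq_one {W : Matrix m m ℂ} (hW : W ∈ unitaryGroup m ℂ) (j : m) :
    ∑ k, Complex.normSq (W k j) = 1 := by
  simpa [star_apply, Complex.star_def, Complex.normSq_conj] using
    sum_normSq_row_eq_one (Unitary.star_mem hW) j

namespace IsHermitian

lemma cfc_self (hA : A.IsHermitian) : hA.cfc (fun t => t) = A :=
  hA.spectral_theorem.symm

lemma cfc_mul_cfc (hA : A.IsHermitian) (f g : ℝ → ℝ) :
    hA.cfc f * hA.cfc g = hA.cfc fun t => f t * g t := by
  rw [IsHermitian.cfc, IsHermitian.cfc, IsHermitian.cfc, ← map_mul, diagonal_mul_diagonal]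
  congr! with k
  simp

lemma cfc_congr (hA : A.IsHermitian) {f g : ℝ → ℝ}
    (h : ∀ k, f (hA.eigenvalues k) = g (hA.eigenvalues k)) : hA.cfc f = hA.cfc g := by
  rw [IsHermitian.cfc, IsHermitian.cfc, show f ∘ hA.eigenvalues = g ∘ hA.eigenvalues from funext h]

lemma isHermitian_cfc (hA : A.IsHermitian) (f : ℝ → ℝ) : (hA.cfc f).IsHermitian :=
  hA.cfc_eq f ▸ cfc_predicate f A

lemma trace_cfc_s9 (hA : A.IsHermitian) (f : ℝ → ℝ) :
    (hA.cfc f).trace = ∑ k, (f (hA.eigenvalues k) : ℂ) := by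
  rw [IsHermitian.cfc, Unitary.conjStarAlgAut_apply, trace_mul_cycle, Unitary.coe_star_mul_self,
    one_mul, trace_diagonal]
  rfl

lemma trace_mul_cfc (hA : A.IsHermitian) (hC : C.IsHermitian) (g : ℝ → ℝ) :
    (A * hC.cfc g).trace = ∑ k, ∑ j,
      ((Complex.normSq ((star (hA.eigenvectorUnitary : Matrix m m ℂ) * hC.eigenvectorUnitary) k j)
        * hA.eigenvalues k * g (hC.eigenvalues j) : ℝ) : ℂ) := by
  set V : Matrix m m ℂ := ↑hA.eigenvectorUnitary
  set U : Matrix m m ℂ := ↑hC.eigenvectorUnitary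
  have hcycle : (V * diagonal (RCLike.ofReal ∘ hA.eigenvalues) * star V *
      (U * diagonal (RCLike.ofReal ∘ g ∘ hC.eigenvalues) * star U)).trace =
      (diagonal (RCLike.ofReal ∘ hA.eigenvalues) * (star V * U) *
        diagonal (RCLike.ofReal ∘ g ∘ hC.eigenvalues) * star (star V * U)).trace := by
    rw [star_mul, star_star, show ∀ X Y : Matrix m m ℂ, V * X * star V * Y =
      V * (X * star V * Y) from fun _ _ => by simp only [mul_assoc], trace_mul_comm V]
    simp only [mul_assoc]
  conv_lhs => rw [hA.spectral_theorem]
  rw [IsHermitian.cfc, Unitary.conjStarAlgAut_apply, Unitary.conjStarAlgAut_apply, hcycle]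
  simp only [trace, diag_apply, mul_apply, diagonal_apply, star_apply, Complex.star_def,
    ite_mul, mul_ite, zero_mul, mul_zero, sum_ite_eq, sum_ite_eq', mem_univ, if_true,
    Function.comp_apply, RCLike.ofReal_eq_complex_ofReal]
  push_cast
  refine sum_congr rfl fun k _ => sum_congr rfl fun j _ => ?_
  rw [← Complex.mul_conj]
  ring

lemma eigenvalues_mul_star_eigenvectorUnitary_mulVec (hB : B.IsHermitian) {u : m → ℂ}
    (hu : B *ᵥ u = 0) (k : m) :
    (hB.eigenvalues k : ℂ) * (star (hB.eigenvectorUnitary : Matrix m m ℂ) *ᵥ u) k = 0 := by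
  set V : Matrix m m ℂ := ↑hB.eigenvectorUnitary
  have hdiag : star V * B = diagonal (RCLike.ofReal ∘ hB.eigenvalues) * star V := by
    rw [← hB.conjStarAlgAut_star_eigenvectorUnitary, Unitary.conjStarAlgAut_apply,
      Unitary.coe_star, star_star, mul_assoc _ V,
      Unitary.mul_star_self_of_mem (SetLike.coe_mem _), mul_one]
  have h : diagonal (RCLike.ofReal ∘ hB.eigenvalues) *ᵥ (star V *ᵥ u) = 0 := by
    rw [mulVec_mulVec, ← hdiag, ← mulVec_mulVec, hu, mulVec_zero]
  simpa [mulVec_diagonal] using congrFun h k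

lemma re_trace_posPow (hA : A.IsHermitian) (β : ℝ) :
    (posPow A β).trace.re = ∑ k, hA.eigenvalues k ^ β := by
  rw [posPow, dif_pos hA, trace_cfc_s9, Complex.re_sum]
  rfl

end IsHermitian

namespace PosSemidef

lemma eigenvalues_mul_eigenvectorUnitary_eq_zero (hB : B.PosSemidef)
    (hC : C.IsHermitian) (hCB : (C - B).PosSemidef) {j : m} (hj : hC.eigenvalues j = 0) (k : m) :
    (hB.1.eigenvalues k : ℂ) *
      (star (hB.1.eigenvectorUnitary : Matrix m m ℂ) * hC.eigenvectorUnitary) k j = 0 := by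
  have hCu : C *ᵥ ⇑(hC.eigenvectorBasis j) = 0 := by
    rw [hC.mulVec_eigenvectorBasis, hj, zero_smul]
  convert hB.1.eigenvalues_mul_star_eigenvectorUnitary_mulVec
    (hB.mulVec_eq_zero_of_sub hCB hCu) k using 2
  simp [mul_apply, mulVec, dotProduct]

theorem rpow_sum_eigenvalues_rpow_le_re_trace {q : ℝ} (hq0 : 0 < q) (hq1 : q < 1)
    (hB : B.PosSemidef) (hC : C.PosSemidef) (hCB : (C - B).PosSemidef) :
    (∑ k, hB.1.eigenvalues k ^ q) ^ (1 / q) ≤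
      (B * hC.1.cfc (· ^ (q - 1))).trace.re * (∑ j, hC.1.eigenvalues j ^ q) ^ ((1 - q) / q) := by
  have hW : star (hB.1.eigenvectorUnitary : Matrix m m ℂ) * hC.1.eigenvectorUnitary ∈
      unitaryGroup m ℂ :=
    Submonoid.mul_mem _ (Unitary.star_mem (SetLike.coe_mem _)) (SetLike.coe_mem _)
  rw [hB.1.trace_mul_cfc hC.1]
  simp only [Complex.re_sum, Complex.ofReal_re]
  refine rpow_sum_rpow_le_of_doublyStochastic hq0 hq1 hB.eigenvalues_nonneg
    hC.eigenvalues_nonneg (fun _ _ => Complex.normSq_nonneg _) (sum_normSq_row_eq_one hW)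
    (sum_normSq_col_eq_one hW) fun k j hj => ?_
  rcases mul_eq_zero.mp (hB.eigenvalues_mul_eigenvectorUnitary_eq_zero hC.1 hCB hj k) with h | h
  · rw [Complex.ofReal_eq_zero.mp h, mul_zero]
  · rw [h, map_zero, zero_mul]

lemma conjTranspose_posPow_half_mul_self (hA : A.PosSemidef) :
    (posPow A (1 / 2))ᴴ * posPow A (1 / 2) = A := by
  rw [posPow, dif_pos hA.1, (hA.1.isHermitian_cfc _).eq, hA.1.cfc_mul_cfc]
  conv_rhs => rw [← hA.1.cfc_self]
  refine hA.1.cfc_congr fun k => ?_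
  rw [← Real.rpow_add' (hA.eigenvalues_nonneg k) (by norm_num)]
  norm_num

end PosSemidef

theorem sum_re_trace_posPow_rpow_le {ι : Type*} [Fintype ι] {q : ℝ} (hq0 : 0 < q) (hq1 : q ≤ 1)
    (B : ι → Matrix m m ℂ) (hB : ∀ i, (B i).PosSemidef) :
    ∑ i, (posPow (B i) q).trace.re ^ (1 / q) ≤ (posPow (∑ i, B i) q).trace.re ^ (1 / q) := by
  have hC : (∑ i, B i).PosSemidef := posSemidef_sum univ fun i _ => hB i
  simp only [hC.1.re_trace_posPow, (hB _).1.re_trace_posPow]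
  rcases hq1.lt_or_eq with hlt | rfl
  · set T := ∑ j, hC.1.eigenvalues j ^ q
    set X := hC.1.cfc (· ^ (q - 1))
    have hT : 0 ≤ T := sum_nonneg fun j _ => Real.rpow_nonneg (hC.eigenvalues_nonneg j) q
    have hCB : ∀ i, (∑ j, B j - B i).PosSemidef := fun i => by
      classical
      rw [← sum_erase_eq_sub (mem_univ i)]
      exact posSemidef_sum _ fun j _ => hB j
    have htrace : ∑ i, (B i * X).trace.re = T := by
      rw [← Complex.re_sum, ← trace_sum, ← sum_mul]
      conv_lhs => rw [← hC.1.cfc_self]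
      rw [hC.1.cfc_mul_cfc, hC.1.trace_cfc_s9, Complex.re_sum]
      refine sum_congr rfl fun j _ => ?_
      rw [Complex.ofReal_re, mul_comm,
        ← Real.rpow_add_one' (hC.eigenvalues_nonneg j) (by simpa using hq0.ne'), sub_add_cancel]
    calc ∑ i, (∑ k, (hB i).1.eigenvalues k ^ q) ^ (1 / q)
        ≤ ∑ i, (B i * X).trace.re * T ^ ((1 - q) / q) := sum_le_sum fun i _ =>
          (hB i).rpow_sum_eigenvalues_rpow_le_re_trace hq0 hlt hC (hCB i)
      _ = T ^ (1 / q) := by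
          rw [← sum_mul, htrace, ← Real.rpow_one_add' hT (by positivity)]
          congr 1
          field_simp
          ring
  · simp only [Real.rpow_one, div_one]
    have htr : ∀ {A : Matrix m m ℂ} (hA : A.IsHermitian), ∑ k, hA.eigenvalues k = A.trace.re :=
      fun hA => by simp [hA.trace_eq_sum_eigenvalues]
    rw [htr hC.1, trace_sum, Complex.re_sum]
    exact le_of_eq (sum_congr rfl fun i _ => htr (hB i).1)

end Matrix

/-- 2-concavity of the Schatten `p`-classes for `0 < p ≤ 2`. -/
theorem statement9 (p : ℝ) (hp0 : 0 < p) (hp2 : p ≤ 2) (n N : ℕ)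
    (z : Fin N → Matrix (Fin n) (Fin n) ℂ) :
    (∑ i, schattenNorm p (z i) ^ 2) ^ (1/2 : ℝ) ≤
      schattenNorm p (posPow (∑ i, (z i)ᴴ * z i) (1/2)) := by
  have hB : ∀ i, ((z i)ᴴ * z i).PosSemidef := fun i => posSemidef_conjTranspose_mul_self (z i)
  have hC : (∑ i, (z i)ᴴ * z i).PosSemidef := posSemidef_sum univ fun i _ => hB i
  have hτ : ∀ {A : Matrix (Fin n) (Fin n) ℂ}, A.PosSemidef → 0 ≤ (posPow A (p / 2)).trace.re :=
    fun hA => hA.1.re_trace_posPow _ ▸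
      sum_nonneg fun k _ => Real.rpow_nonneg (hA.eigenvalues_nonneg k) _
  have hexp : 1 / p * 2 = 1 / (p / 2) := by field_simp
  calc (∑ i, schattenNorm p (z i) ^ 2) ^ (1/2 : ℝ)
      = (∑ i, (posPow ((z i)ᴴ * z i) (p / 2)).trace.re ^ (1 / (p / 2))) ^ (1/2 : ℝ) := by
        simp only [schattenNorm, ← Real.rpow_natCast, ← Real.rpow_mul (hτ (hB _)), Nat.cast_ofNat,
          hexp]
    _ ≤ ((posPow (∑ i, (z i)ᴴ * z i) (p / 2)).trace.re ^ (1 / (p / 2))) ^ (1/2 : ℝ) :=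
        Real.rpow_le_rpow (sum_nonneg fun i _ => Real.rpow_nonneg (hτ (hB i)) _)
          (sum_re_trace_posPow_rpow_le (by positivity) (by linarith) _ hB) (by norm_num)
    _ = schattenNorm p (posPow (∑ i, (z i)ᴴ * z i) (1/2)) := by
        rw [schattenNorm, hC.conjTranspose_posPow_half_mul_self, ← Real.rpow_mul (hτ hC)]
        congr 1
        field_simp
end

section
/- (Hahn–Banach separation for cones of bounded functions, Lemma 4.1, finite form.) Let S be a set and let F be a convex cone of bounded real-valued functions on S such that sup_{s∈S} f(s) ≥ 0 for every f ∈ F. Then for every finite family f_1,…,f_n ∈ F and every ε > 0 there exists a finitely supported probability measure λ on S such that ∫ f_j dλ ≥ −ε for all j = 1,…,n. -/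
/-! Put `φ s = (f₁ s, …, f_N s) ∈ ℝᴺ`. If the convex hull of `φ '' S` meets the open orthant
`{x | ∀ j, -ε < x j}`, a convex combination of points of `φ '' S` is the required measure.
Otherwise Hahn–Banach gives a functional `L` with `L < u` on the orthant and `u ≤ L` on the hull.
Since `0` lies in the orthant, `u > 0`; since the orthant is upward closed, `L = -∑ c_j x_j`
with `c ≥ 0`. Then `g = ∑ c_j f_j` lies in the cone and `g ≤ -u` on `S`, contradicting
`sup g ≥ 0`. -/

open Set Finset

lemma Finset.sum_smul_mem_of_cone {E ι : Type*} [AddCommMonoid E] [Module ℝ E] {F : Set E}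
    (hadd : ∀ f ∈ F, ∀ g ∈ F, f + g ∈ F) (hsmul : ∀ c : ℝ, 0 ≤ c → ∀ f ∈ F, c • f ∈ F)
    {t : Finset ι} (ht : t.Nonempty) {c : ι → ℝ} (hc : ∀ i ∈ t, 0 ≤ c i) {f : ι → E}
    (hf : ∀ i ∈ t, f i ∈ F) : ∑ i ∈ t, c i • f i ∈ F := by
  induction ht using Finset.Nonempty.cons_induction with
  | singleton i => simpa using hsmul _ (hc i (mem_singleton_self i)) _ (hf i (mem_singleton_self i))
  | cons i t hi _ ih =>
    rw [sum_cons]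
    simp only [mem_cons, forall_eq_or_imp] at hc hf
    exact hadd _ (hsmul _ hc.1 _ hf.1) _ (ih hc.2 hf.2)

lemma exists_fin_weights_of_mem_convexHull_range {R E S : Type*} [Field R] [LinearOrder R]
    [IsStrictOrderedRing R] [AddCommGroup E] [Module R E] {φ : S → E} {x : E}
    (hx : x ∈ convexHull R (range φ)) :
    ∃ (m : ℕ) (pts : Fin m → S) (w : Fin m → R),
      (∀ i, 0 ≤ w i) ∧ ∑ i, w i = 1 ∧ ∑ i, w i • φ (pts i) = x := by
  obtain ⟨ι, _, w, z, hw₀, hw₁, hz, rfl⟩ := mem_convexHull_iff_exists_fintype.1 hx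
  choose pts hpts using hz
  let e := (Fintype.equivFin ι).symm
  refine ⟨_, pts ∘ e, w ∘ e, fun i => hw₀ _, (e.sum_comp w).trans hw₁, ?_⟩
  simp only [Function.comp_apply, hpts]
  exact e.sum_comp fun i => w i • z i

lemma Convex.exists_nonneg_weights_of_forall_exists_le {ι : Type*} [Fintype ι]
    {K : Set (ι → ℝ)} (hK : Convex ℝ K) {ε : ℝ} (hε : 0 < ε) (h : ∀ x ∈ K, ∃ j, x j ≤ -ε) :
    ∃ c : ι → ℝ, (∀ j, 0 ≤ c j) ∧ ∃ δ > 0, ∀ x ∈ K, ∑ j, c j * x j ≤ -δ := by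
  classical
  set U : Set (ι → ℝ) := univ.pi fun _ => Ioi (-ε)
  have hUK : Disjoint U K := Set.disjoint_left.2 fun x hxU hxK => by
    obtain ⟨j, hj⟩ := h x hxK
    exact (hj.trans_lt (hxU j (mem_univ j))).false
  obtain ⟨L, u, hLU, hLK⟩ := geometric_hahn_banach_open (convex_pi fun _ _ => convex_Ioi _)
    (isOpen_set_pi finite_univ fun _ _ => isOpen_Ioi) hK hUK
  have hU : ∀ x, (∀ j, -ε < x j) → x ∈ U := fun x hx j _ => hx j
  have hu : 0 < u := by simpa using hLU 0 (hU 0 fun _ => neg_lt_zero.2 hε)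
  have hL : ∀ x, L x = ∑ j, x j * L (Pi.single j 1) := fun x => by
    conv_lhs => rw [pi_eq_sum_univ' x]
    simp only [map_sum, map_smul, smul_eq_mul]
  refine ⟨fun j => -L (Pi.single j 1), fun j => ?_, u, hu, fun x hx => ?_⟩
  · by_contra! hj
    have ha : 0 < L (Pi.single j 1) := neg_lt_zero.1 hj
    have ht : 0 ≤ u / L (Pi.single j 1) := (div_pos hu ha).le
    have hnonneg : (0 : ι → ℝ) ≤ (u / L (Pi.single j 1)) • Pi.single j 1 :=
      smul_nonneg ht (Pi.single_nonneg.2 zero_le_one)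
    have hmem := hU _ fun k => (neg_lt_zero.2 hε).trans_le (hnonneg k)
    have := hLU _ hmem
    rw [map_smul, smul_eq_mul, div_mul_cancel₀ _ ha.ne'] at this
    exact this.false
  · have hcx : ∑ j, -L (Pi.single j 1) * x j = -L x := by
      rw [hL x, ← sum_neg_distrib]
      exact sum_congr rfl fun j _ => by ring
    linarith [hLK x hx]

theorem statement13_general {S : Type*} [Nonempty S] (F : Set (S → ℝ))
    (hadd : ∀ f ∈ F, ∀ g ∈ F, f + g ∈ F)
    (hsmul : ∀ c : ℝ, 0 ≤ c → ∀ f ∈ F, c • f ∈ F)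
    (hsup : ∀ f ∈ F, ∀ δ : ℝ, 0 < δ → ∃ s : S, -δ ≤ f s)
    (N : ℕ) (f : Fin N → (S → ℝ)) (hf : ∀ j, f j ∈ F)
    (ε : ℝ) (hε : 0 < ε) :
    ∃ (m : ℕ) (pts : Fin m → S) (w : Fin m → ℝ),
      (∀ i, 0 ≤ w i) ∧ (∑ i, w i = 1) ∧
      ∀ j, -ε ≤ ∑ i, w i * f j (pts i) := by
  set φ : S → (Fin N → ℝ) := fun s j => f j s
  have hφ : ∀ s, φ s ∈ convexHull ℝ (range φ) := fun s => subset_convexHull ℝ _ ⟨s, rfl⟩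
  obtain ⟨x, hxK, hx⟩ : ∃ x ∈ convexHull ℝ (range φ), ∀ j, -ε < x j := by
    by_contra! hfar
    obtain ⟨c, hc, δ, hδ, hcK⟩ :=
      (convex_convexHull ℝ _).exists_nonneg_weights_of_forall_exists_le hε hfar
    obtain ⟨j₀, -⟩ := hfar _ (hφ (Classical.arbitrary S))
    have hg : ∑ j, c j • f j ∈ F :=
      sum_smul_mem_of_cone hadd hsmul ⟨j₀, mem_univ _⟩ (fun j _ => hc j) fun j _ => hf j
    obtain ⟨s, hs⟩ := hsup _ hg (δ / 2) (half_pos hδ)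
    have hgs := hcK _ (hφ s)
    simp only [Finset.sum_apply, Pi.smul_apply, smul_eq_mul] at hs
    linarith
  obtain ⟨m, pts, w, hw₀, hw₁, rfl⟩ := exists_fin_weights_of_mem_convexHull_range hxK
  refine ⟨m, pts, w, hw₀, hw₁, fun j => (hx j).le.trans_eq ?_⟩
  simp [Finset.sum_apply, φ]

/-- Lemma 4.1 (finite form): Hahn–Banach separation for convex cones of bounded
real-valued functions. -/
theorem statement13 {S : Type*} [Nonempty S] (F : Set (S → ℝ))
    (hadd : ∀ f ∈ F, ∀ g ∈ F, f + g ∈ F)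
    (hsmul : ∀ c : ℝ, 0 ≤ c → ∀ f ∈ F, c • f ∈ F)
    (hbdd : ∀ f ∈ F, ∃ M : ℝ, ∀ s : S, |f s| ≤ M)
    (hsup : ∀ f ∈ F, ∀ δ : ℝ, 0 < δ → ∃ s : S, -δ ≤ f s)
    (N : ℕ) (f : Fin N → (S → ℝ)) (hf : ∀ j, f j ∈ F)
    (ε : ℝ) (hε : 0 < ε) :
    ∃ (m : ℕ) (pts : Fin m → S) (w : Fin m → ℝ),
      (∀ i, 0 ≤ w i) ∧ (∑ i, w i = 1) ∧
      ∀ j, -ε ≤ ∑ i, w i * f j (pts i) :=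
  statement13_general F hadd hsmul hsup N f hf ε hε
end
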